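/- arXiv:1907.00351 — 4 statements merged into one kernel-verified Lean document; each statement's English description precedes it below -/
import Mathlib

section
/- The orientation O6 of the octahedron graph K_{2,2,2} in which the three outer vertices form a directed triangle, the three inner vertices form a directed triangle, and the arcs between inner and outer vertices are oriented to make each inner-outer-outer and inner-inner-outer facial triangle directed, admits no acyclic 2-colouring in which the three outer vertices all receive the same colour. -/
def AcyclicOn {V : Type*} (A : V → V → Prop) (X : Set V) : Prop :=
  ∀ v ∈ X, ¬ Relation.TransGen (fun a b => a ∈ X ∧ b ∈ X ∧ A a b) v v

def IsAcyclicColoring {V : Type*} (A : V → V → Prop) (k : ℕ) (c : V → Fin k) : Prop :=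
  ∀ i : Fin k, AcyclicOn A {v | c v = i}

def IsOrientation {V : Type*} (G : SimpleGraph V) (A : V → V → Prop) : Prop :=
  (∀ a b, A a b → ¬ A b a) ∧ (∀ a b, G.Adj a b ↔ (A a b ∨ A b a))

def SimpleGraph.IsMinor {W V : Type*} (H : SimpleGraph W) (G : SimpleGraph V) : Prop :=
  ∃ f : W → Set V, (∀ w, (f w).Nonempty) ∧ (∀ w, (G.induce (f w)).Connected) ∧
    (Pairwise fun w w' => Disjoint (f w) (f w')) ∧
    ∀ ⦃w w'⦄, H.Adj w w' → ∃ u ∈ f w, ∃ v ∈ f w', G.Adj u v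

def SimpleGraph.Planar {V : Type*} (G : SimpleGraph V) : Prop :=
  ¬ (completeGraph (Fin 5)).IsMinor G ∧ ¬ (completeBipartiteGraph (Fin 3) (Fin 3)).IsMinor G

def IsPlanarTriangulation {V : Type*} [Finite V] (G : SimpleGraph V) : Prop :=
  3 ≤ Nat.card V ∧ G.Planar ∧ ∀ H : SimpleGraph V, G ≤ H → H.Planar → H = G

def IsTriangle {V : Type*} (G : SimpleGraph V) (a b c : V) : Prop :=
  G.Adj a b ∧ G.Adj a c ∧ G.Adj b c

def IsFacialTriangle {V : Type*} (G : SimpleGraph V) (a b c : V) : Prop :=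
  IsTriangle G a b c ∧ (G.induce {v | v ≠ a ∧ v ≠ b ∧ v ≠ c}).Preconnected

def IsSeparatingTriangle {V : Type*} (G : SimpleGraph V) (a b c : V) : Prop :=
  IsTriangle G a b c ∧ ¬ (G.induce {v | v ≠ a ∧ v ≠ b ∧ v ≠ c}).Preconnected

def FourConnected {V : Type*} [Finite V] (G : SimpleGraph V) : Prop :=
  5 ≤ Nat.card V ∧ ∀ S : Set V, Nat.card S ≤ 3 → (G.induce Sᶜ).Connected

/-- The octahedron orientation O6: outer vertices 0,1,2, inner vertices 3,4,5. -/
def O6 (a b : Fin 6) : Prop :=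
  (a, b) ∈ ([(0,1),(1,2),(2,0),(3,4),(4,5),(5,3),(1,3),(3,0),(2,4),(4,1),(0,5),(5,2)] :
    List (Fin 6 × Fin 6))

theorem AcyclicOn.not_directed_triangle {V : Type*} {A : V → V → Prop} {X : Set V}
    (hX : AcyclicOn A X) {a b c : V} (ha : a ∈ X) (hb : b ∈ X) (hc : c ∈ X)
    (hab : A a b) (hbc : A b c) (hca : A c a) : False :=
  hX a ha <| .head ⟨ha, hb, hab⟩ <| .head ⟨hb, hc, hbc⟩ <| .single ⟨hc, ha, hca⟩

theorem IsAcyclicColoring.not_monochromatic_directed_triangle {V : Type*} {A : V → V → Prop}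
    {k : ℕ} {col : V → Fin k} (hcol : IsAcyclicColoring A k col) {a b c : V}
    (hab : A a b) (hbc : A b c) (hca : A c a) : ¬ (col a = col b ∧ col b = col c) := by
  rintro ⟨hcab, hcbc⟩
  exact (hcol (col a)).not_directed_triangle rfl hcab.symm (hcab.trans hcbc).symm
    hab hbc hca

theorem O6_outer_triangle : O6 0 1 ∧ O6 1 2 ∧ O6 2 0 := by
  unfold O6
  decide

/-- O6 has no acyclic 2-colouring with the outer triangle monochromatic. -/
theorem stmt_2 :
    ¬ ∃ c : Fin 6 → Fin 2, IsAcyclicColoring O6 2 c ∧ c 0 = c 1 ∧ c 1 = c 2 := by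
  rintro ⟨c, hc, h01, h12⟩
  obtain ⟨a01, a12, a20⟩ := O6_outer_triangle
  exact hc.not_monochromatic_directed_triangle a01 a12 a20 ⟨h01, h12⟩
end

section
/- Every orientation of the Wagner graph V8 admits an acyclic 2-colouring. -/
/-- The Wagner graph V8 on ZMod 8. -/
def WagnerGraph : SimpleGraph (ZMod 8) :=
  SimpleGraph.fromRel (fun i j => j = i + 1 ∨ j = i + 4)

/-!
Colour `0, 1, 2, 3` with one colour and `4, 5, 6, 7` with the other. Each colour class induces a
path in V8 (`0 - 1 - 2 - 3` and `4 - 5 - 6 - 7`), and any orientation of a path is acyclic: summing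
`±1` along the path according to the direction of each edge gives a potential that strictly
increases along every arc.
-/

theorem acyclicOn_of_lt {V α : Type*} [Preorder α] {A : V → V → Prop} {X : Set V} (f : V → α)
    (h : ∀ a ∈ X, ∀ b ∈ X, A a b → f a < f b) : AcyclicOn A X := by
  intro v _ hcycle
  have increasing : ∀ w, Relation.TransGen (fun a b => a ∈ X ∧ b ∈ X ∧ A a b) v w → f v < f w := by
    intro w hw
    induction hw with
    | single hab => exact h _ hab.1 _ hab.2.1 hab.2.2
    | tail _ hab ih => exact ih.trans (h _ hab.1 _ hab.2.1 hab.2.2)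
  exact lt_irrefl _ (increasing v hcycle)

theorem acyclicOn_of_arcs_consecutive {V : Type*} {A : V → V → Prop} {X : Set V}
    (hA : ∀ a b, A a b → ¬ A b a) (g : V → ℕ) (hg : Function.Injective g)
    (h : ∀ a ∈ X, ∀ b ∈ X, A a b → g b = g a + 1 ∨ g a = g b + 1) : AcyclicOn A X := by
  classical
  let step : ℕ → ℤ := fun i => if ∃ a b, g a = i ∧ g b = i + 1 ∧ A a b then 1 else -1
  let potential : ℕ → ℤ := fun n => ∑ i ∈ Finset.range n, step i
  refine acyclicOn_of_lt (potential ∘ g) fun a ha b hb hab => ?_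
  rcases h a ha b hb hab with hsucc | hsucc
  · have : step (g a) = 1 := if_pos ⟨a, b, rfl, hsucc, hab⟩
    simp only [Function.comp_apply, potential, hsucc, Finset.sum_range_succ, this]
    omega
  · have : step (g b) = -1 := by
      refine if_neg ?_
      rintro ⟨b', a', hb', ha', hba⟩
      rw [hg hb', hg (ha'.trans hsucc.symm)] at hba
      exact hA _ _ hab hba
    simp only [Function.comp_apply, potential, hsucc, Finset.sum_range_succ, this]
    omega

theorem wagnerGraph_val_consecutive_of_adj :
    ∀ a b : ZMod 8, WagnerGraph.Adj a b → a.val / 4 = b.val / 4 →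
      b.val = a.val + 1 ∨ a.val = b.val + 1 := by
  simp only [WagnerGraph, SimpleGraph.fromRel_adj]
  decide

/-- every orientation of V8 admits an acyclic 2-colouring. -/
theorem stmt_3 (A : ZMod 8 → ZMod 8 → Prop) (hA : IsOrientation WagnerGraph A) :
    ∃ c : ZMod 8 → Fin 2, IsAcyclicColoring A 2 c := by
  refine ⟨fun v => ⟨v.val / 4, by have := ZMod.val_lt v; omega⟩, fun i => ?_⟩
  refine acyclicOn_of_arcs_consecutive hA.1 ZMod.val (ZMod.val_injective 8)
    fun a ha b hb hab => wagnerGraph_val_consecutive_of_adj a b ((hA.2 a b).2 (Or.inl hab)) ?_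
  exact congrArg Fin.val (ha.trans hb.symm)
end

section
/- For every orientation of the Wagner graph V8, every pair of adjacent vertices u, v, and every pre-colouring p : {u,v} → {1,2}, there exists an acyclic 2-colouring of the orientation extending p. -/
/-!
Call a colouring *defect-one* if every colour class induces a matching. A monochromatic
directed walk in a defect-one colouring cannot take two steps without returning along the arc
it came from, so defect-one colourings are acyclic for every orientation. The Wagner graph has a
defect-one 2-colouring with colour class `{0, 1, 3, 6}`, whose monochromatic edges are rim
edges, and the parity colouring, whose monochromatic edges are diagonals; between them they have
monochromatic and bichromatic edges of both kinds. Rotating one of them so that a suitable edge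
lands on `uv`, and then permuting the colours, extends any precolouring of `uv`.
-/

namespace SimpleGraph

variable {V W α β : Type*}

def IsDefectOneColoring (G : SimpleGraph V) (c : V → α) : Prop :=
  ∀ ⦃a b d⦄, G.Adj a b → G.Adj b d → c a = c b → c b = c d → d = a

instance [Fintype V] [DecidableEq V] [DecidableEq α] (G : SimpleGraph V) [DecidableRel G.Adj]
    (c : V → α) : Decidable (G.IsDefectOneColoring c) := by
  unfold IsDefectOneColoring; infer_instance

theorem IsDefectOneColoring.comp_embedding {G : SimpleGraph V} {H : SimpleGraph W} {c : V → α}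
    (hc : G.IsDefectOneColoring c) (f : H ↪g G) : H.IsDefectOneColoring (c ∘ f) :=
  fun _ _ _ hab hbd hcab hcbd =>
    f.injective (hc (f.map_adj_iff.2 hab) (f.map_adj_iff.2 hbd) hcab hcbd)

theorem IsDefectOneColoring.injective_comp {G : SimpleGraph V} {c : V → α}
    (hc : G.IsDefectOneColoring c) {f : α → β} (hf : Function.Injective f) :
    G.IsDefectOneColoring (f ∘ c) :=
  fun _ _ _ hab hbd hcab hcbd => hc hab hbd (hf hcab) (hf hcbd)

end SimpleGraph

theorem IsOrientation.isAcyclicColoring_of_isDefectOneColoring {V : Type*}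
    {G : SimpleGraph V} {A : V → V → Prop} (hA : IsOrientation G A) {k : ℕ} {c : V → Fin k}
    (hc : G.IsDefectOneColoring c) : IsAcyclicColoring A k c := by
  intro i v _ hcycle
  set R : V → V → Prop := fun a b => a ∈ {x | c x = i} ∧ b ∈ {x | c x = i} ∧ A a b
  -- Two consecutive monochromatic arcs would form a 2-cycle, so `R` is vacuously transitive.
  have : IsTrans V R := ⟨by
    rintro a b d ⟨ha, hb, hab⟩ ⟨-, hd, hbd⟩
    obtain rfl := hc ((hA.2 a b).2 (.inl hab)) ((hA.2 b d).2 (.inl hbd))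
      (ha.trans hb.symm) (hb.trans hd.symm)
    exact (hA.1 _ _ hab hbd).elim⟩
  rw [Relation.transGen_eq_self] at hcycle
  exact hA.1 v v hcycle.2.2 hcycle.2.2

instance : DecidableRel WagnerGraph.Adj :=
  fun a b => decidable_of_iff _ (SimpleGraph.fromRel_adj _ a b).symm

def wagnerRotation (t : ZMod 8) : WagnerGraph ≃g WagnerGraph where
  toEquiv := Equiv.addRight t
  map_rel_iff' := by
    intro a b
    simp [WagnerGraph, add_right_comm _ t]

def wagnerColoringRim : ZMod 8 → Fin 2 :=
  fun x => if x ∈ ({0, 1, 3, 6} : Finset (ZMod 8)) then 0 else 1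

def wagnerColoringParity : ZMod 8 → Fin 2 :=
  fun x => if x ∈ ({0, 2, 4, 6} : Finset (ZMod 8)) then 0 else 1

set_option maxRecDepth 2000 in
theorem isDefectOneColoring_of_mem_wagnerColorings :
    ∀ P ∈ [wagnerColoringRim, wagnerColoringParity], WagnerGraph.IsDefectOneColoring P := by
  decide

theorem exists_wagnerColoring_rotation (u v : ZMod 8) (huv : WagnerGraph.Adj u v) (s : Fin 2) :
    ∃ P ∈ [wagnerColoringRim, wagnerColoringParity], ∃ t, P (v + t) = P (u + t) + s := by
  revert u v s; decide

/-- every orientation of V8 admits an acyclic 2-colouring extending any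
pre-colouring of two adjacent vertices. -/
theorem stmt_4 (A : ZMod 8 → ZMod 8 → Prop) (hA : IsOrientation WagnerGraph A)
    (u v : ZMod 8) (huv : WagnerGraph.Adj u v) (pu pv : Fin 2) :
    ∃ c : ZMod 8 → Fin 2, IsAcyclicColoring A 2 c ∧ c u = pu ∧ c v = pv := by
  obtain ⟨P, hP, t, hPt⟩ := exists_wagnerColoring_rotation u v huv (pv - pu)
  have hc : WagnerGraph.IsDefectOneColoring ((· + (pu - P (u + t))) ∘ P ∘ wagnerRotation t) :=
    ((isDefectOneColoring_of_mem_wagnerColorings P hP).comp_embedding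
      (wagnerRotation t).toEmbedding).injective_comp (add_left_injective _)
  refine ⟨_, hA.isAcyclicColoring_of_isDefectOneColoring hc, ?_, ?_⟩
  · exact add_sub_cancel _ _
  · change P (v + t) + (pu - P (u + t)) = pv
    rw [hPt]; abel
end

section
/- Suppose that for every planar triangulation, every facial triangle with a non-monochromatic pre-colouring by 2 colours, and every orientation, there is an extending acyclic 2-colouring with no monochromatic facial triangle. Then for every planar triangulation T, every triangle (facial or separating) a1a2a3 in T with a non-monochromatic pre-colouring, and every orientation of T, there is an extending acyclic 2-colouring with no monochromatic triangle at all. -/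
open Relation

/-! ### Helper lemmas -/

section Cards

lemma card_lt_of_not_mem {V : Type*} [Finite V] {s : Set V} {w : V} (hw : w ∉ s) :
    Nat.card ↥s < Nat.card V := by
  rw [Nat.card_coe_set_eq, ← Set.ncard_univ]
  exact Set.ncard_lt_ncard ⟨Set.subset_univ _, fun h => hw (h (Set.mem_univ w))⟩ Set.finite_univ

lemma three_le_card {V : Type*} [Finite V] {s : Set V} {x y z : V}
    (hx : x ∈ s) (hy : y ∈ s) (hz : z ∈ s) (hxy : x ≠ y) (hxz : x ≠ z) (hyz : y ≠ z) :
    3 ≤ Nat.card ↥s := by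
  rw [Nat.card_coe_set_eq]
  have h3 : ({x, y, z} : Set V).ncard = 3 :=
    Set.ncard_eq_three.mpr ⟨x, y, z, hxy, hxz, hyz, rfl⟩
  rw [← h3]
  refine Set.ncard_le_ncard ?_ s.toFinite
  intro v hv
  rcases hv with rfl | rfl | rfl
  · exact hx
  · exact hy
  · exact hz

end Cards

section Planarity

lemma isMinor_of_induce {V W : Type*} {G : SimpleGraph V} {s : Set V} {Hg : SimpleGraph W}
    (h : Hg.IsMinor (G.induce s)) : Hg.IsMinor G := by
  obtain ⟨f, hne, hconn, hdisj, hadj⟩ := h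
  refine ⟨fun w => Subtype.val '' f w, fun w => (hne w).image _, ?_, ?_, ?_⟩
  · intro w
    let F : ((G.induce s).induce (f w)) →g (G.induce (Subtype.val '' f w)) :=
      { toFun := fun p => ⟨(p.1 : V), ⟨p.1, p.2, rfl⟩⟩
        map_rel' := fun h => h }
    have hnonempty : Nonempty ↥(Subtype.val '' f w) := by
      obtain ⟨a, ha⟩ := hne w
      exact ⟨⟨a, a, ha, rfl⟩⟩
    refine SimpleGraph.Connected.mk ?_
    intro p q
    obtain ⟨p0, hp0, hpv⟩ := p.2
    obtain ⟨q0, hq0, hqv⟩ := q.2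
    have hr := (hconn w).preconnected ⟨p0, hp0⟩ ⟨q0, hq0⟩
    have := hr.map F
    have hFp : F ⟨p0, hp0⟩ = p := Subtype.ext hpv
    have hFq : F ⟨q0, hq0⟩ = q := Subtype.ext hqv
    rwa [hFp, hFq] at this
  · intro w w' hww'
    exact Set.disjoint_image_of_injective Subtype.val_injective (hdisj hww')
  · intro w w' hww'
    obtain ⟨u, hu, v, hv, huv⟩ := hadj hww'
    exact ⟨u, ⟨u, hu, rfl⟩, v, ⟨v, hv, rfl⟩, huv⟩

lemma induce_planar {V : Type*} {G : SimpleGraph V} (h : G.Planar) (s : Set V) :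
    (G.induce s).Planar :=
  ⟨fun hm => h.1 (isMinor_of_induce hm), fun hm => h.2 (isMinor_of_induce hm)⟩

noncomputable instance finiteSimpleGraph {W : Type*} [Finite W] : Finite (SimpleGraph W) := by
  classical
  have := Fintype.ofFinite W
  infer_instance

lemma exists_maximal_planar_supergraph {W : Type*} [Finite W] (G0 : SimpleGraph W)
    (h : G0.Planar) :
    ∃ G : SimpleGraph W, G0 ≤ G ∧ G.Planar ∧ ∀ H : SimpleGraph W, G ≤ H → H.Planar → H = G := by
  classical
  obtain ⟨G, hG, hmax⟩ := Set.Finite.exists_maximalFor (id : SimpleGraph W → SimpleGraph W)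
    {K | G0 ≤ K ∧ K.Planar} (Set.toFinite _) ⟨G0, le_refl _, h⟩
  refine ⟨G, hG.1, hG.2, fun H hle hpl => ?_⟩
  exact le_antisymm (hmax (show H ∈ {K | G0 ≤ K ∧ K.Planar} from ⟨le_trans hG.1 hle, hpl⟩) hle) hle

end Planarity
open Relation

section Machinery

variable {V : Type*}

/-- Transfer a `TransGen` cycle on ambient vertices into a subtype relation. -/
lemma transGen_subtype {s : Set V} {R : V → V → Prop} {R' : ↥s → ↥s → Prop}
    (hmem : ∀ a b, R a b → a ∈ s ∧ b ∈ s)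
    (hstep : ∀ a b (ha : a ∈ s) (hb : b ∈ s), R a b → R' ⟨a, ha⟩ ⟨b, hb⟩)
    {a b : V} (h : TransGen R a b) :
    ∀ (ha : a ∈ s) (hb : b ∈ s), TransGen R' ⟨a, ha⟩ ⟨b, hb⟩ := by
  induction h with
  | single h => exact fun ha hb => TransGen.single (hstep _ _ ha hb h)
  | tail h1 h2 ih =>
    intro ha hb
    exact (ih ha (hmem _ _ h2).1).tail (hstep _ _ (hmem _ _ h2).1 hb h2)

def QRel (R1 R2 : V → V → Prop) (I : Set V) : V → V → Prop :=
  fun a b => R1 a b ∨ (a ∈ I ∧ b ∈ I ∧ TransGen R2 a b)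

lemma proj_side {R R1 R2 : V → V → Prop} {s1 s2 : Set V}
    (hsplit : ∀ a b, R a b → R1 a b ∨ R2 a b)
    (hR1 : ∀ a b, R1 a b → a ∈ s1 ∧ b ∈ s1)
    (hR2 : ∀ a b, R2 a b → a ∈ s2 ∧ b ∈ s2)
    {a b : V} (h : TransGen R a b) (hb : b ∈ s1) :
    (a ∈ s1 → TransGen (QRel R1 R2 (s1 ∩ s2)) a b) ∧
    (a ∉ s1 → ∃ t ∈ s1 ∩ s2, TransGen R2 a t ∧
        ReflTransGen (QRel R1 R2 (s1 ∩ s2)) t b) := by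
  induction h using TransGen.head_induction_on with
  | single h =>
    rcases hsplit _ _ h with h1 | h2
    · exact ⟨fun _ => TransGen.single (Or.inl h1), fun ha => absurd (hR1 _ _ h1).1 ha⟩
    · constructor
      · intro ha
        exact TransGen.single (Or.inr ⟨⟨ha, (hR2 _ _ h2).1⟩, ⟨hb, (hR2 _ _ h2).2⟩,
          TransGen.single h2⟩)
      · intro _
        exact ⟨b, ⟨hb, (hR2 _ _ h2).2⟩, TransGen.single h2, ReflTransGen.refl⟩
  | @head a' c' hstep htg IH =>
    rcases hsplit _ _ hstep with h1 | h2
    · refine ⟨fun ha => ?_, fun ha => absurd (hR1 _ _ h1).1 ha⟩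
      have hc : c' ∈ s1 := (hR1 _ _ h1).2
      exact (IH.1 hc).head (Or.inl h1)
    · have ha2 : a' ∈ s2 := (hR2 _ _ h2).1
      have hc2 : c' ∈ s2 := (hR2 _ _ h2).2
      constructor
      · intro ha
        by_cases hc1 : c' ∈ s1
        · exact (IH.1 hc1).head (Or.inr ⟨⟨ha, ha2⟩, ⟨hc1, hc2⟩, TransGen.single h2⟩)
        · obtain ⟨t, ht, htg2, hrt⟩ := IH.2 hc1
          have : TransGen (QRel R1 R2 (s1 ∩ s2)) a' t :=
            TransGen.single (Or.inr ⟨⟨ha, ha2⟩, ht, (TransGen.single h2).trans htg2⟩)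
          exact this.trans_left hrt
      · intro _
        by_cases hc1 : c' ∈ s1
        · exact ⟨c', ⟨hc1, hc2⟩, TransGen.single h2, (IH.1 hc1).to_reflTransGen⟩
        · obtain ⟨t, ht, htg2, hrt⟩ := IH.2 hc1
          exact ⟨t, ht, htg2.head h2, hrt⟩

lemma no_cycle {R R1 R2 : V → V → Prop} {s1 s2 : Set V}
    (hsplit : ∀ a b, R a b → R1 a b ∨ R2 a b)
    (hR1 : ∀ a b, R1 a b → a ∈ s1 ∧ b ∈ s1)
    (hR2 : ∀ a b, R2 a b → a ∈ s2 ∧ b ∈ s2)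
    (hC1 : ∀ v, ¬ TransGen R1 v v) (hC2 : ∀ v, ¬ TransGen R2 v v)
    (hshort1 : ∀ a b, a ∈ s1 ∩ s2 → b ∈ s1 ∩ s2 → TransGen R2 a b → R1 a b)
    (hshort2 : ∀ a b, a ∈ s2 ∩ s1 → b ∈ s2 ∩ s1 → TransGen R1 a b → R2 a b) :
    ∀ v, ¬ TransGen R v v := by
  intro v hv
  by_cases h1 : v ∈ s1
  · have hQ := (proj_side hsplit hR1 hR2 hv h1).1 h1
    have : TransGen R1 v v :=
      TransGen.mono (fun a b hab => hab.elim id (fun h => hshort1 a b h.1 h.2.1 h.2.2)) v v hQ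
    exact hC1 v this
  · have h2 : v ∈ s2 := by
      obtain ⟨cnode, hR', -⟩ := TransGen.head'_iff.mp hv
      rcases hsplit _ _ hR' with h | h
      · exact absurd (hR1 _ _ h).1 h1
      · exact (hR2 _ _ h).1
    have hQ := (proj_side (fun a b h => (hsplit a b h).symm) hR2 hR1 hv h2).1 h2
    have : TransGen R2 v v :=
      TransGen.mono (fun a b hab => hab.elim id (fun h => hshort2 a b h.1 h.2.1 h.2.2)) v v hQ
    exact hC2 v this

end Machinery
section Sides

variable {V : Type*}

/-- The one–coloured "side relation". -/
def SideRel (A : V → V → Prop) (S s : Set V) : V → V → Prop :=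
  fun a b => a ∈ s ∧ b ∈ s ∧ a ∈ S ∧ b ∈ S ∧ A a b

lemma tri_adj {T : SimpleGraph V} {x y z : V} (hxyz : IsTriangle T x y z) :
    ∀ a b : V, a ∈ ({x, y, z} : Set V) → b ∈ ({x, y, z} : Set V) → a ≠ b → T.Adj a b := by
  intro a b ha hb hne
  simp only [Set.mem_insert_iff, Set.mem_singleton_iff] at ha hb
  rcases ha with rfl | rfl | rfl <;> rcases hb with rfl | rfl | rfl <;>
    first
      | exact absurd rfl hne
      | exact hxyz.1
      | exact hxyz.1.symm
      | exact hxyz.2.1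
      | exact hxyz.2.1.symm
      | exact hxyz.2.2
      | exact hxyz.2.2.symm

lemma short_lemma {T : SimpleGraph V} {A : V → V → Prop} (hA : IsOrientation T A)
    {x y z : V} (hxyz : IsTriangle T x y z) (S : Set V) {s1 s2 : Set V}
    (hinter : s1 ∩ s2 = {x, y, z})
    (hC2 : ∀ v, ¬ Relation.TransGen (SideRel A S s2) v v) :
    ∀ a b, a ∈ s1 ∩ s2 → b ∈ s1 ∩ s2 → Relation.TransGen (SideRel A S s2) a b →
      SideRel A S s1 a b := by
  intro a b ha hb htg
  have haS : a ∈ S := by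
    obtain ⟨t0, h0, -⟩ := Relation.TransGen.head'_iff.mp htg
    exact h0.2.2.1
  have hbS : b ∈ S := by
    obtain ⟨t0, -, h0⟩ := Relation.TransGen.tail'_iff.mp htg
    exact h0.2.2.2.1
  by_cases hab : a = b
  · subst hab; exact absurd htg (hC2 a)
  · have hadj : T.Adj a b := tri_adj hxyz a b (hinter ▸ ha) (hinter ▸ hb) hab
    rcases (hA.2 a b).mp hadj with hAab | hAba
    · exact ⟨ha.1, hb.1, haS, hbS, hAab⟩
    · have : SideRel A S s2 b a := ⟨hb.2, ha.2, hbS, haS, hAba⟩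
      exact absurd (htg.tail this) (hC2 a)

lemma extend_orientation {W : Type*} [Finite W] (T' G : SimpleGraph W) (A' : W → W → Prop)
    (hle : T' ≤ G) (hanti : ∀ a b, A' a b → ¬ A' b a)
    (hor : ∀ a b, T'.Adj a b ↔ A' a b ∨ A' b a) :
    ∃ A1 : W → W → Prop, IsOrientation G A1 ∧ (∀ a b, A' a b → A1 a b) := by
  obtain ⟨n, ⟨e⟩⟩ := Finite.exists_equiv_fin W
  refine ⟨fun a b => A' a b ∨ (G.Adj a b ∧ ¬ T'.Adj a b ∧ e a < e b), ⟨?_, ?_⟩,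
    fun a b h => Or.inl h⟩
  · rintro a b (h | ⟨hg, ht, hlt⟩) hba
    · rcases hba with h' | ⟨-, ht', -⟩
      · exact hanti a b h h'
      · exact ht' ((hor b a).mpr (Or.inr h))
    · rcases hba with h' | ⟨-, -, hlt'⟩
      · exact ht ((hor a b).mpr (Or.inr h'))
      · exact absurd hlt' (not_lt_of_gt hlt)
  · intro a b
    constructor
    · intro hg
      by_cases ht : T'.Adj a b
      · rcases (hor a b).mp ht with h | h
        · exact Or.inl (Or.inl h)
        · exact Or.inr (Or.inl h)
      · have hne : e a ≠ e b := fun h => hg.ne (e.injective h)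
        rcases lt_or_gt_of_ne hne with hlt | hlt
        · exact Or.inl (Or.inr ⟨hg, ht, hlt⟩)
        · exact Or.inr (Or.inr ⟨hg.symm, fun h => ht h.symm, hlt⟩)
    · rintro ((h | ⟨hg, -, -⟩) | (h | ⟨hg, -, -⟩))
      · exact hle ((hor a b).mpr (Or.inl h))
      · exact hg
      · exact hle ((hor b a).mpr (Or.inl h)).symm
      · exact hg.symm

end Sides

/-- The statement being proven, for one vertex type. -/
def Stmt (V : Type) [Finite V] : Prop :=
  ∀ (T : SimpleGraph V), IsPlanarTriangulation T →
    ∀ a₁ a₂ a₃ : V, IsTriangle T a₁ a₂ a₃ →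
    ∀ p₁ p₂ p₃ : Fin 2, ¬ (p₁ = p₂ ∧ p₂ = p₃) →
    ∀ A : V → V → Prop, IsOrientation T A →
      ∃ c : V → Fin 2, IsAcyclicColoring A 2 c ∧
        (∀ a b d : V, IsTriangle T a b d → ¬ (c a = c b ∧ c b = c d)) ∧
        c a₁ = p₁ ∧ c a₂ = p₂ ∧ c a₃ = p₃
lemma glue (V : Type) [Finite V] (T : SimpleGraph V) (hT : IsPlanarTriangulation T)
    (A : V → V → Prop) (hA : IsOrientation T A)
    (x y z : V) (hxyz : IsTriangle T x y z)
    (s1 s2 : Set V) (hinter : s1 ∩ s2 = {x, y, z})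
    (hcover : ∀ v, v ∈ s1 ∨ v ∈ s2)
    (hedge : ∀ a b, T.Adj a b → (a ∈ s1 ∧ b ∈ s1) ∨ (a ∈ s2 ∧ b ∈ s2))
    (hcard1 : Nat.card ↥s1 < Nat.card V) (hcard2 : Nat.card ↥s2 < Nat.card V)
    (a1 a2 a3 : V) (ha1 : a1 ∈ s1) (ha2 : a2 ∈ s1) (ha3 : a3 ∈ s1)
    (hta : IsTriangle T a1 a2 a3)
    (p1 p2 p3 : Fin 2) (hp : ¬ (p1 = p2 ∧ p2 = p3))
    (IH : ∀ (W : Type) [Finite W], Nat.card W < Nat.card V → Stmt W) :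
    ∃ c : V → Fin 2, IsAcyclicColoring A 2 c ∧
      (∀ a b d : V, IsTriangle T a b d → ¬ (c a = c b ∧ c b = c d)) ∧
      c a1 = p1 ∧ c a2 = p2 ∧ c a3 = p3 := by
  classical
  have hx12 : x ∈ s1 ∩ s2 := by rw [hinter]; simp
  have hy12 : y ∈ s1 ∩ s2 := by rw [hinter]; simp
  have hz12 : z ∈ s1 ∩ s2 := by rw [hinter]; simp
  have hxy : x ≠ y := hxyz.1.ne
  have hxz : x ≠ z := hxyz.2.1.ne
  have hyz : y ≠ z := hxyz.2.2.ne
  -- side 1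
  obtain ⟨G1, hle1, hG1pl, hG1max⟩ :=
    exists_maximal_planar_supergraph (T.induce s1) (induce_planar hT.2.1 s1)
  have hT1 : IsPlanarTriangulation G1 :=
    ⟨three_le_card hx12.1 hy12.1 hz12.1 hxy hxz hyz, hG1pl, hG1max⟩
  obtain ⟨A1, hA1or, hA1ext⟩ := extend_orientation (T.induce s1) G1
    (fun p q => A ↑p ↑q) hle1 (fun p q h => hA.1 ↑p ↑q h) (fun p q => hA.2 ↑p ↑q)
  have htaG1 : IsTriangle G1 ⟨a1, ha1⟩ ⟨a2, ha2⟩ ⟨a3, ha3⟩ :=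
    ⟨hle1 hta.1, hle1 hta.2.1, hle1 hta.2.2⟩
  obtain ⟨c1, hacyc1, hmono1, hv11, hv12, hv13⟩ :=
    IH ↥s1 hcard1 G1 hT1 ⟨a1, ha1⟩ ⟨a2, ha2⟩ ⟨a3, ha3⟩ htaG1 p1 p2 p3 hp A1 hA1or
  have htxyzG1 : IsTriangle G1 ⟨x, hx12.1⟩ ⟨y, hy12.1⟩ ⟨z, hz12.1⟩ :=
    ⟨hle1 hxyz.1, hle1 hxyz.2.1, hle1 hxyz.2.2⟩
  set q1 := c1 ⟨x, hx12.1⟩ with hq1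
  set q2 := c1 ⟨y, hy12.1⟩ with hq2
  set q3 := c1 ⟨z, hz12.1⟩ with hq3
  have hq : ¬ (q1 = q2 ∧ q2 = q3) := hmono1 _ _ _ htxyzG1
  -- side 2
  obtain ⟨G2, hle2, hG2pl, hG2max⟩ :=
    exists_maximal_planar_supergraph (T.induce s2) (induce_planar hT.2.1 s2)
  have hT2 : IsPlanarTriangulation G2 :=
    ⟨three_le_card hx12.2 hy12.2 hz12.2 hxy hxz hyz, hG2pl, hG2max⟩
  obtain ⟨A2, hA2or, hA2ext⟩ := extend_orientation (T.induce s2) G2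
    (fun p q => A ↑p ↑q) hle2 (fun p q h => hA.1 ↑p ↑q h) (fun p q => hA.2 ↑p ↑q)
  have htxyzG2 : IsTriangle G2 ⟨x, hx12.2⟩ ⟨y, hy12.2⟩ ⟨z, hz12.2⟩ :=
    ⟨hle2 hxyz.1, hle2 hxyz.2.1, hle2 hxyz.2.2⟩
  obtain ⟨c2, hacyc2, hmono2, hv21, hv22, hv23⟩ :=
    IH ↥s2 hcard2 G2 hT2 ⟨x, hx12.2⟩ ⟨y, hy12.2⟩ ⟨z, hz12.2⟩ htxyzG2 q1 q2 q3 hq A2 hA2or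
  -- the glued colouring
  let c : V → Fin 2 := fun v =>
    if h : v ∈ s1 then c1 ⟨v, h⟩ else c2 ⟨v, (hcover v).resolve_left h⟩
  have hagree1 : ∀ v (hv : v ∈ s1), c v = c1 ⟨v, hv⟩ := fun v hv => dif_pos hv
  have hagree2 : ∀ v (hv : v ∈ s2), c v = c2 ⟨v, hv⟩ := by
    intro v hv
    by_cases h1 : v ∈ s1
    · have hmem : v ∈ ({x, y, z} : Set V) := hinter ▸ ⟨h1, hv⟩
      simp only [Set.mem_insert_iff, Set.mem_singleton_iff] at hmem
      rcases hmem with rfl | rfl | rfl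
      · exact (hagree1 v h1).trans hv21.symm
      · exact (hagree1 v h1).trans hv22.symm
      · exact (hagree1 v h1).trans hv23.symm
    · exact dif_neg h1
  have tri_side : ∀ a b d, IsTriangle T a b d →
      (a ∈ s1 ∧ b ∈ s1 ∧ d ∈ s1) ∨ (a ∈ s2 ∧ b ∈ s2 ∧ d ∈ s2) := by
    intro a b d htri
    rcases hedge _ _ htri.1 with ⟨ha, hb⟩ | ⟨ha, hb⟩ <;>
      rcases hedge _ _ htri.2.1 with ⟨ha', hd⟩ | ⟨ha', hd⟩ <;>
        rcases hedge _ _ htri.2.2 with ⟨hb', hd'⟩ | ⟨hb', hd'⟩ <;> tauto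
  refine ⟨c, ?_, ?_, (hagree1 a1 ha1).trans hv11, (hagree1 a2 ha2).trans hv12,
    (hagree1 a3 ha3).trans hv13⟩
  · -- acyclicity
    intro i v hvS hcyc
    set S : Set V := {u | c u = i} with hS
    have hsplit' : ∀ a b, (fun a b => a ∈ S ∧ b ∈ S ∧ A a b) a b →
        SideRel A S s1 a b ∨ SideRel A S s2 a b := by
      rintro a b ⟨haS, hbS, hAab⟩
      rcases hedge a b ((hA.2 a b).mpr (Or.inl hAab)) with ⟨h1a, h1b⟩ | ⟨h2a, h2b⟩
      · exact Or.inl ⟨h1a, h1b, haS, hbS, hAab⟩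
      · exact Or.inr ⟨h2a, h2b, haS, hbS, hAab⟩
    have hR1' : ∀ a b, SideRel A S s1 a b → a ∈ s1 ∧ b ∈ s1 := fun a b h => ⟨h.1, h.2.1⟩
    have hR2' : ∀ a b, SideRel A S s2 a b → a ∈ s2 ∧ b ∈ s2 := fun a b h => ⟨h.1, h.2.1⟩
    have hC1 : ∀ w, ¬ Relation.TransGen (SideRel A S s1) w w := by
      intro w hw
      obtain ⟨t0, h0, -⟩ := Relation.TransGen.head'_iff.mp hw
      have hws : w ∈ s1 := h0.1
      have hwS : c w = i := h0.2.2.1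
      refine hacyc1 i ⟨w, hws⟩ ?_ (transGen_subtype (fun a b h => ⟨h.1, h.2.1⟩) ?_ hw hws hws)
      · show c1 ⟨w, hws⟩ = i
        rw [← hagree1 w hws]; exact hwS
      · intro a b ha hb h
        refine ⟨?_, ?_, hA1ext _ _ h.2.2.2.2⟩
        · show c1 ⟨a, ha⟩ = i
          rw [← hagree1 a ha]; exact h.2.2.1
        · show c1 ⟨b, hb⟩ = i
          rw [← hagree1 b hb]; exact h.2.2.2.1
    have hC2 : ∀ w, ¬ Relation.TransGen (SideRel A S s2) w w := by
      intro w hw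
      obtain ⟨t0, h0, -⟩ := Relation.TransGen.head'_iff.mp hw
      have hws : w ∈ s2 := h0.1
      have hwS : c w = i := h0.2.2.1
      refine hacyc2 i ⟨w, hws⟩ ?_ (transGen_subtype (fun a b h => ⟨h.1, h.2.1⟩) ?_ hw hws hws)
      · show c2 ⟨w, hws⟩ = i
        rw [← hagree2 w hws]; exact hwS
      · intro a b ha hb h
        refine ⟨?_, ?_, hA2ext _ _ h.2.2.2.2⟩
        · show c2 ⟨a, ha⟩ = i
          rw [← hagree2 a ha]; exact h.2.2.1
        · show c2 ⟨b, hb⟩ = i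
          rw [← hagree2 b hb]; exact h.2.2.2.1
    exact no_cycle (R1 := SideRel A S s1) (R2 := SideRel A S s2) (s1 := s1) (s2 := s2)
      hsplit' hR1' hR2' hC1 hC2
      (short_lemma hA hxyz S hinter hC2)
      (short_lemma hA hxyz S (by rw [Set.inter_comm]; exact hinter) hC1) v hcyc
  · -- no monochromatic triangle
    rintro a b d htri ⟨hab, hbd⟩
    rcases tri_side a b d htri with ⟨ha, hb, hd⟩ | ⟨ha, hb, hd⟩
    · refine hmono1 ⟨a, ha⟩ ⟨b, hb⟩ ⟨d, hd⟩
        ⟨hle1 htri.1, hle1 htri.2.1, hle1 htri.2.2⟩ ⟨?_, ?_⟩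
      · rw [← hagree1 a ha, ← hagree1 b hb]; exact hab
      · rw [← hagree1 b hb, ← hagree1 d hd]; exact hbd
    · refine hmono2 ⟨a, ha⟩ ⟨b, hb⟩ ⟨d, hd⟩
        ⟨hle2 htri.1, hle2 htri.2.1, hle2 htri.2.2⟩ ⟨?_, ?_⟩
      · rw [← hagree2 a ha, ← hagree2 b hb]; exact hab
      · rw [← hagree2 b hb, ← hagree2 d hd]; exact hbd
theorem stmt_aux
    (H : ∀ (V : Type) [Finite V] (T : SimpleGraph V), IsPlanarTriangulation T →
      ∀ a₁ a₂ a₃ : V, IsFacialTriangle T a₁ a₂ a₃ →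
      ∀ p₁ p₂ p₃ : Fin 2, ¬ (p₁ = p₂ ∧ p₂ = p₃) →
      ∀ A : V → V → Prop, IsOrientation T A →
        ∃ c : V → Fin 2, IsAcyclicColoring A 2 c ∧
          (∀ a b d : V, IsFacialTriangle T a b d → ¬ (c a = c b ∧ c b = c d)) ∧
          c a₁ = p₁ ∧ c a₂ = p₂ ∧ c a₃ = p₃) :
    ∀ (n : ℕ) (V : Type) [Finite V], Nat.card V ≤ n → Stmt V := by
  intro n
  induction n with
  | zero =>
    intro V _ hle T hT
    exact absurd hT.1 (by omega)
  | succ n ih =>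
    intro V _ hle T hT a1 a2 a3 hta p1 p2 p3 hp A hA
    by_cases hfac : ∀ u v w, IsTriangle T u v w →
        (T.induce {t | t ≠ u ∧ t ≠ v ∧ t ≠ w}).Preconnected
    · obtain ⟨c, hc1, hc2, hv⟩ := H V T hT a1 a2 a3 ⟨hta, hfac _ _ _ hta⟩ p1 p2 p3 hp A hA
      exact ⟨c, hc1, fun a b d htri => hc2 a b d ⟨htri, hfac _ _ _ htri⟩, hv⟩
    · push_neg at hfac
      obtain ⟨x, y, z, hxyz, hnc⟩ := hfac
      set X : Set V := {t | t ≠ x ∧ t ≠ y ∧ t ≠ z} with hX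
      rw [SimpleGraph.Preconnected] at hnc
      push_neg at hnc
      obtain ⟨u, w, huw⟩ := hnc
      set B : Set V := {v | ∃ h : v ∈ X, (T.induce X).Reachable u ⟨v, h⟩} with hB
      have hBX : B ⊆ X := fun v hv => hv.1
      have hstep : ∀ a b, a ∈ B → T.Adj a b → b ∈ X → b ∈ B := by
        rintro a b ⟨haX, hreach⟩ hab hbX
        refine ⟨hbX, hreach.trans ?_⟩
        exact SimpleGraph.Adj.reachable (by exact hab)
      have huB : (u : V) ∈ B := ⟨u.2, by rw [Subtype.eta]⟩
      have hwB : (w : V) ∉ B := by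
        rintro ⟨hwX, hreach⟩
        exact huw (by rwa [Subtype.eta] at hreach)
      set s1 : Set V := B ∪ {x, y, z} with hs1
      set s2 : Set V := Bᶜ with hs2
      have hxyzB : ∀ v, v ∈ ({x, y, z} : Set V) → v ∉ B := by
        intro v hv hvB
        rcases hv with rfl | rfl | rfl
        · exact (hBX hvB).1 rfl
        · exact (hBX hvB).2.1 rfl
        · exact (hBX hvB).2.2 rfl
      have hinter : s1 ∩ s2 = {x, y, z} := by
        ext v
        constructor
        · rintro ⟨hv1, hv2⟩
          rcases hv1 with hvB | hvxyz
          · exact absurd hvB hv2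
          · exact hvxyz
        · intro hv
          exact ⟨Or.inr hv, hxyzB v hv⟩
      have hcover : ∀ v, v ∈ s1 ∨ v ∈ s2 := by
        intro v
        by_cases hvB : v ∈ B
        · exact Or.inl (Or.inl hvB)
        · exact Or.inr hvB
      have hnotX : ∀ v : V, v ∉ X → v ∈ ({x, y, z} : Set V) := by
        intro v hv
        rw [hX] at hv
        simp only [Set.mem_setOf_eq, not_and_or, not_not] at hv
        rcases hv with rfl | rfl | rfl <;> simp
      have hedge : ∀ a b, T.Adj a b → (a ∈ s1 ∧ b ∈ s1) ∨ (a ∈ s2 ∧ b ∈ s2) := by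
        intro a b hab
        by_cases haB : a ∈ B
        · left
          refine ⟨Or.inl haB, ?_⟩
          by_cases hbX : b ∈ X
          · exact Or.inl (hstep a b haB hab hbX)
          · exact Or.inr (hnotX b hbX)
        · by_cases hbB : b ∈ B
          · left
            refine ⟨?_, Or.inl hbB⟩
            by_cases haX : a ∈ X
            · exact absurd (hstep b a hbB hab.symm haX) haB
            · exact Or.inr (hnotX a haX)
          · exact Or.inr ⟨haB, hbB⟩
      have hw1 : (w : V) ∉ s1 := by
        rintro (hwB' | hwxyz)
        · exact hwB hwB'
        · rcases hwxyz with h | h | h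
          · exact w.2.1 h
          · exact w.2.2.1 h
          · exact w.2.2.2 h
      have hu2 : (u : V) ∉ s2 := fun h => h huB
      have hcard1 : Nat.card ↥s1 < Nat.card V := card_lt_of_not_mem hw1
      have hcard2 : Nat.card ↥s2 < Nat.card V := card_lt_of_not_mem hu2
      have IH : ∀ (W : Type) [Finite W], Nat.card W < Nat.card V → Stmt W := by
        intro W _ hlt
        exact ih W (by omega)
      have tri_side : ∀ a b d, IsTriangle T a b d →
          (a ∈ s1 ∧ b ∈ s1 ∧ d ∈ s1) ∨ (a ∈ s2 ∧ b ∈ s2 ∧ d ∈ s2) := by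
        intro a b d htri
        rcases hedge _ _ htri.1 with ⟨ha, hb⟩ | ⟨ha, hb⟩ <;>
          rcases hedge _ _ htri.2.1 with ⟨ha', hd⟩ | ⟨ha', hd⟩ <;>
            rcases hedge _ _ htri.2.2 with ⟨hb', hd'⟩ | ⟨hb', hd'⟩ <;> tauto
      rcases tri_side a1 a2 a3 hta with ⟨h1, h2, h3⟩ | ⟨h1, h2, h3⟩
      · exact glue V T hT A hA x y z hxyz s1 s2 hinter hcover hedge hcard1 hcard2
          a1 a2 a3 h1 h2 h3 hta p1 p2 p3 hp IH
      · exact glue V T hT A hA x y z hxyz s2 s1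
          (by rw [Set.inter_comm]; exact hinter)
          (fun v => (hcover v).symm)
          (fun a b hab => (hedge a b hab).symm)
          hcard2 hcard1 a1 a2 a3 h1 h2 h3 hta p1 p2 p3 hp IH


/-- from extendability of non-monochromatic pre-colourings of facial
triangles one gets, for arbitrary triangles, extending acyclic 2-colourings without any
monochromatic triangle. -/
theorem stmt_11
    (H : ∀ (V : Type) [Finite V] (T : SimpleGraph V), IsPlanarTriangulation T →
      ∀ a₁ a₂ a₃ : V, IsFacialTriangle T a₁ a₂ a₃ →
      ∀ p₁ p₂ p₃ : Fin 2, ¬ (p₁ = p₂ ∧ p₂ = p₃) →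
      ∀ A : V → V → Prop, IsOrientation T A →
        ∃ c : V → Fin 2, IsAcyclicColoring A 2 c ∧
          (∀ a b d : V, IsFacialTriangle T a b d → ¬ (c a = c b ∧ c b = c d)) ∧
          c a₁ = p₁ ∧ c a₂ = p₂ ∧ c a₃ = p₃)
    (V : Type) [Finite V] (T : SimpleGraph V) (hT : IsPlanarTriangulation T)
    (a₁ a₂ a₃ : V) (ht : IsTriangle T a₁ a₂ a₃)
    (p₁ p₂ p₃ : Fin 2) (hp : ¬ (p₁ = p₂ ∧ p₂ = p₃))
    (A : V → V → Prop) (hA : IsOrientation T A) :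
    ∃ c : V → Fin 2, IsAcyclicColoring A 2 c ∧
      (∀ a b d : V, IsTriangle T a b d → ¬ (c a = c b ∧ c b = c d)) ∧
      c a₁ = p₁ ∧ c a₂ = p₂ ∧ c a₃ = p₃ := by
  exact stmt_aux H (Nat.card V) V (le_refl _) T hT a₁ a₂ a₃ ht p₁ p₂ p₃ hp A hA
end
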